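/- Let n ≥ 1, let d⁰ ∈ ℝ^n satisfy d⁰_i ≥ 0 for all i, let α > 0 and Γ ≥ 0, and let U = U(d⁰, α, Γ) be the budgeted uncertainty set. For any allocation x ∈ {0,1}^n, let I = {i : x_i = 1} and Ī = {i : x_i = 0}, and for S ∈ {I, Ī} set K_S = min(|S|, ⌊Γ⌋) and Δ_S = min(Γ, |S|) − min(⌊Γ⌋, |S|). Then sup_{d ∈ U} M(x, d) = max_{S ∈ {I, Ī}} ( ∑_{i ∈ S} d⁰_i + α · ( ∑_{k=1}^{K_S} (d⁰)^S_{(k)} + Δ_S · (d⁰)^S_{(K_S+1)} ) ). In particular, the static-allocation worst-case makespan SA(U) is bounded above by this quantity for every choice of x. -/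

import Mathlib

open Finset

/-- Makespan of assignment `f` of `n` tasks to `m` machines under durations `d`. -/
noncomputable def mk {n m : ℕ} (f : Fin n → Fin m) (d : Fin n → ℝ) : ℝ :=
  ⨆ j : Fin m, ∑ i ∈ Finset.univ.filter (fun i => f i = j), d i

/-- Two-machine makespan of allocation `x` under durations `d`. -/
noncomputable def M2 {n : ℕ} (x : Fin n → Bool) (d : Fin n → ℝ) : ℝ :=
  max (∑ i ∈ Finset.univ.filter (fun i => x i = true), d i)
      (∑ i ∈ Finset.univ.filter (fun i => x i = false), d i)

/-- Budgeted uncertainty set `U(d⁰, α, Γ)`. -/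
def budgetU {n : ℕ} (d0 : Fin n → ℝ) (α Γ : ℝ) : Set (Fin n → ℝ) :=
  { d | ∃ u : Fin n → ℝ, (∀ i, u i ∈ Set.Icc (0:ℝ) 1) ∧
        (∀ i, d i = d0 i * (1 + α * u i)) ∧ (∑ i, u i) ≤ Γ }

/-- Static-allocation worst-case makespan on two machines. -/
noncomputable def SA {n : ℕ} (U : Set (Fin n → ℝ)) : ℝ :=
  ⨅ x : Fin n → Bool, sSup ((fun d => M2 x d) '' U)

/-- Perfect-hindsight worst-case makespan on two machines. -/
noncomputable def PH {n : ℕ} (U : Set (Fin n → ℝ)) : ℝ :=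
  sSup ((fun d => ⨅ x : Fin n → Bool, M2 x d) '' U)

/-- `kthLargest S c k` is the `k`-th largest value (1-based) among `(c i)_{i ∈ S}`,
with value `0` when `k > |S|` (in particular `c^S_{(|S|+1)} = 0`). -/
noncomputable def kthLargest {n : ℕ} (S : Finset (Fin n)) (c : Fin n → ℝ) (k : ℕ) : ℝ :=
  ((S.val.map c).sort (· ≥ ·)).getD (k - 1) 0

/-! The two machine loads are maximised separately: the supremum of a maximum of two functions
is the maximum of their suprema. On the machine with task set `S` the load is
`∑_{i ∈ S} d⁰ᵢ + α ∑_{i ∈ S} d⁰ᵢ uᵢ`, so one has to solve the fractional knapsack problem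
`max ∑_{i ∈ S} cᵢ uᵢ` over `u ∈ [0,1]ⁿ`, `∑ uᵢ ≤ Γ`. With the values of `c` on `S` sorted
decreasingly, the greedy choice that fills the first `K = min(|S|, ⌊Γ⌋)` of them and puts the
remaining budget `Δ = min(Γ, |S|) - K` on the next one attains the closed form. It is optimal by weak duality with
the threshold `θ = c^S_{(K+1)}`: `cᵢ uᵢ ≤ (cᵢ - θ)⁺ + θ uᵢ`, and summing gives
`∑_{k ≤ K} (c^S_{(k)} - θ) + θ (K + Δ)`. -/
theorem mul_le_max_sub_add_mul {a u : ℝ} (θ : ℝ) (hu₀ : 0 ≤ u) (hu₁ : u ≤ 1) :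
    a * u ≤ max (a - θ) 0 + θ * u := by
  rcases le_total θ a with h | h
  · nlinarith [le_max_left (a - θ) 0]
  · nlinarith [le_max_right (a - θ) 0]

theorem sum_range_max_sub_eq_of_antitone {a : ℕ → ℝ} (ha : Antitone a) {K m : ℕ}
    (hKm : K ≤ m) :
    ∑ k ∈ range m, max (a k - a K) 0 = ∑ k ∈ range K, (a k - a K) := by
  rw [← Finset.sum_range_add_sum_Ico _ hKm]
  have htail : ∑ k ∈ Ico K m, max (a k - a K) 0 = 0 :=
    Finset.sum_eq_zero fun k hk => max_eq_right (sub_nonpos.mpr (ha (Finset.mem_Ico.mp hk).1))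
  rw [htail, add_zero]
  exact Finset.sum_congr rfl fun k hk =>
    max_eq_left (sub_nonneg.mpr (ha (Finset.mem_range.mp hk).le))

def greedyWeight (K : ℕ) (δ : ℝ) (k : ℕ) : ℝ :=
  if k < K then 1 else if k = K then δ else 0

theorem greedyWeight_mem_Icc {K : ℕ} {δ : ℝ} (hδ : δ ∈ Set.Icc (0 : ℝ) 1) (k : ℕ) :
    greedyWeight K δ k ∈ Set.Icc (0 : ℝ) 1 := by
  unfold greedyWeight
  split_ifs
  exacts [⟨zero_le_one, le_rfl⟩, hδ, ⟨le_rfl, zero_le_one⟩]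

theorem sum_range_mul_greedyWeight (f : ℕ → ℝ) {K m : ℕ} {δ : ℝ} (hKm : K ≤ m)
    (hδ : K = m → δ = 0) :
    ∑ k ∈ range m, f k * greedyWeight K δ k = ∑ k ∈ range K, f k + δ * f K := by
  have hhead : ∑ k ∈ range K, f k * greedyWeight K δ k = ∑ k ∈ range K, f k :=
    Finset.sum_congr rfl fun k hk => by simp [greedyWeight, Finset.mem_range.mp hk]
  rcases hKm.lt_or_eq with hKm | rfl
  · have htail : ∑ k ∈ Ico (K + 1) m, f k * greedyWeight K δ k = 0 :=
      Finset.sum_eq_zero fun k hk => by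
        have := (Finset.mem_Ico.mp hk).1
        simp [greedyWeight, show ¬k < K by omega, show k ≠ K by omega]
    rw [← Finset.sum_range_add_sum_Ico _ hKm, htail, Finset.sum_range_succ, hhead]
    simp [greedyWeight, mul_comm]
  · rw [hhead, hδ rfl, zero_mul, add_zero]

theorem min_sub_min_floor_mem_Icc {Γ : ℝ} (hΓ : 0 ≤ Γ) (m : ℕ) :
    min Γ (m : ℝ) - min (⌊Γ⌋₊ : ℝ) m ∈ Set.Icc (0 : ℝ) 1 := by
  have hfloor := Nat.floor_le hΓ
  have hlt := Nat.lt_floor_add_one Γ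
  constructor
  · exact sub_nonneg.mpr (min_le_min_right _ hfloor)
  · rcases le_total (m : ℝ) ⌊Γ⌋₊ with h | h
    · rw [min_eq_right h, min_eq_right (h.trans hfloor), sub_self]
      exact zero_le_one
    · rw [min_eq_left h]
      linarith [min_le_left Γ m]

theorem min_sub_min_floor_eq_zero {Γ : ℝ} (hΓ : 0 ≤ Γ) {m : ℕ} (hm : min m ⌊Γ⌋₊ = m) :
    min Γ (m : ℝ) - min (⌊Γ⌋₊ : ℝ) m = 0 := by
  have hm' : (m : ℝ) ≤ ⌊Γ⌋₊ := by exact_mod_cast min_eq_left_iff.mp hm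
  rw [min_eq_right (hm'.trans (Nat.floor_le hΓ)), min_eq_right hm', sub_self]

theorem cast_min_floor_add_sub (Γ : ℝ) (m : ℕ) :
    ((min m ⌊Γ⌋₊ : ℕ) : ℝ) + (min Γ (m : ℝ) - min (⌊Γ⌋₊ : ℝ) m) = min Γ m := by
  rw [Nat.cast_min, min_comm]
  ring

theorem IsGreatest.image_max {β α : Type*} [LinearOrder α] {f g : β → α} {s : Set β} {a b : α}
    (hf : IsGreatest (f '' s) a) (hg : IsGreatest (g '' s) b) :
    IsGreatest ((fun x => max (f x) (g x)) '' s) (max a b) := by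
  refine ⟨?_, ?_⟩
  · rcases le_total a b with hab | hab
    · obtain ⟨y, hy, hgy⟩ := hg.1
      refine ⟨y, hy, show max (f y) (g y) = max a b from ?_⟩
      rw [max_eq_right hab, max_eq_right (hgy ▸ (hf.2 ⟨y, hy, rfl⟩).trans hab), hgy]
    · obtain ⟨y, hy, hfy⟩ := hf.1
      refine ⟨y, hy, show max (f y) (g y) = max a b from ?_⟩
      rw [max_eq_left hab, max_eq_left (hfy ▸ (hg.2 ⟨y, hy, rfl⟩).trans hab), hfy]
  · rintro _ ⟨y, hy, rfl⟩
    exact max_le_max (hf.2 ⟨y, hy, rfl⟩) (hg.2 ⟨y, hy, rfl⟩)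

section kthLargest

variable {n : ℕ} (S : Finset (Fin n)) (c : Fin n → ℝ)

theorem kthLargest_succ (k : ℕ) :
    kthLargest S c (k + 1) = ((S.val.map c).sort (· ≥ ·)).getD k 0 := rfl

theorem kthLargest_nonneg (hc : ∀ i, 0 ≤ c i) (k : ℕ) : 0 ≤ kthLargest S c k := by
  unfold kthLargest
  set l := (S.val.map c).sort (· ≥ ·)
  rcases lt_or_ge (k - 1) l.length with h | h
  · rw [List.getD_eq_getElem _ _ h]
    obtain ⟨i, -, hi⟩ := Multiset.mem_map.mp ((Multiset.mem_sort _).mp (l.getElem_mem h))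
    exact hi ▸ hc i
  · rw [List.getD_eq_default _ _ h]

theorem antitone_kthLargest_succ (hc : ∀ i, 0 ≤ c i) :
    Antitone fun k => kthLargest S c (k + 1) := by
  intro i j hij
  simp only [kthLargest_succ]
  set l := (S.val.map c).sort (· ≥ ·)
  rcases lt_or_ge j l.length with hj | hj
  · rcases hij.lt_or_eq with hij | rfl
    · rw [List.getD_eq_getElem _ _ hj, List.getD_eq_getElem _ _ (hij.trans hj)]
      exact List.pairwise_iff_getElem.mp (Multiset.pairwise_sort _ _) i j _ hj hij
    · rfl
  · rw [List.getD_eq_default _ _ hj]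
    exact kthLargest_nonneg S c hc (i + 1)

theorem exists_equiv_kthLargest :
    ∃ σ : Fin S.card ≃ S, ∀ k, c (σ k) = kthLargest S c (k + 1) := by
  set L := S.toList.mergeSort fun i j => decide (c j ≤ c i)
  have hperm : L.Perm S.toList := List.mergeSort_perm _ _
  have hlen : L.length = S.card := by rw [hperm.length_eq, Finset.length_toList]
  have hmem : ∀ i ∈ L, i ∈ S := fun i hi => Finset.mem_toList.mp (hperm.mem_iff.mp hi)
  have hmap : L.map c = (S.val.map c).sort (· ≥ ·) := by
    rw [List.map_mergeSort (s := fun a b => decide (b ≤ a)) (fun _ _ _ _ => rfl),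
      ← Finset.coe_toList, Multiset.map_coe, Multiset.coe_sort]
  let e : Fin S.card → S := fun k => ⟨L[k.1], hmem _ (L.getElem_mem _)⟩
  have he : e.Injective := fun k k' h => Fin.ext
    ((hperm.nodup_iff.mpr S.nodup_toList).getElem_inj_iff.mp (congrArg Subtype.val h))
  refine ⟨Equiv.ofBijective e ((Fintype.bijective_iff_injective_and_card e).mpr ⟨he, by simp⟩),
    fun k => ?_⟩
  rw [kthLargest_succ, ← hmap, List.getD_eq_getElem _ _ (by simp [hlen]), List.getElem_map]
  rfl

theorem sum_comp_eq_sum_range_kthLargest (f : ℝ → ℝ) :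
    ∑ i ∈ S, f (c i) = ∑ k ∈ range S.card, f (kthLargest S c (k + 1)) := by
  obtain ⟨σ, hσ⟩ := exists_equiv_kthLargest S c
  rw [← Finset.sum_coe_sort, ← σ.sum_comp, ← Fin.sum_univ_eq_sum_range]
  simp only [hσ]

end kthLargest

section knapsack

variable {n : ℕ} (S : Finset (Fin n)) (c : Fin n → ℝ)

noncomputable def knapsackValue (Γ : ℝ) : ℝ :=
  (∑ k ∈ Finset.Icc 1 (min S.card ⌊Γ⌋₊), kthLargest S c k) +
    (min Γ (S.card : ℝ) - min (⌊Γ⌋₊ : ℝ) (S.card : ℝ)) * kthLargest S c (min S.card ⌊Γ⌋₊ + 1)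

theorem knapsackValue_eq (Γ : ℝ) :
    knapsackValue S c Γ =
      ∑ k ∈ range (min S.card ⌊Γ⌋₊), kthLargest S c (k + 1) +
        (min Γ (S.card : ℝ) - min (⌊Γ⌋₊ : ℝ) S.card) * kthLargest S c (min S.card ⌊Γ⌋₊ + 1) := by
  rw [knapsackValue, Finset.range_eq_Ico, Finset.sum_Ico_add', zero_add,
    Finset.Ico_add_one_right_eq_Icc]

theorem sum_mul_le_knapsackValue (hc : ∀ i, 0 ≤ c i) {Γ : ℝ} {u : Fin n → ℝ}
    (hu : ∀ i, u i ∈ Set.Icc (0 : ℝ) 1) (hsum : ∑ i, u i ≤ Γ) :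
    ∑ i ∈ S, c i * u i ≤ knapsackValue S c Γ := by
  set a := fun k => kthLargest S c (k + 1)
  set K := min S.card ⌊Γ⌋₊
  set Δ := min Γ (S.card : ℝ) - min (⌊Γ⌋₊ : ℝ) S.card
  have haK : 0 ≤ a K := kthLargest_nonneg S c hc _
  have huS : ∑ i ∈ S, u i ≤ K + Δ := by
    rw [cast_min_floor_add_sub]
    refine le_min ((Finset.sum_le_sum_of_subset_of_nonneg S.subset_univ
      fun i _ _ => (hu i).1).trans hsum) ?_
    simpa using Finset.sum_le_sum fun i (_ : i ∈ S) => (hu i).2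
  calc ∑ i ∈ S, c i * u i ≤ ∑ i ∈ S, (max (c i - a K) 0 + a K * u i) :=
        Finset.sum_le_sum fun i _ => mul_le_max_sub_add_mul _ (hu i).1 (hu i).2
    _ = ∑ k ∈ range S.card, max (a k - a K) 0 + a K * ∑ i ∈ S, u i := by
        rw [Finset.sum_add_distrib, ← Finset.mul_sum,
          sum_comp_eq_sum_range_kthLargest S c fun t => max (t - a K) 0]
    _ ≤ ∑ k ∈ range K, (a k - a K) + a K * (K + Δ) := by
        rw [sum_range_max_sub_eq_of_antitone (antitone_kthLargest_succ S c hc) (min_le_left _ _)]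
        gcongr
    _ = knapsackValue S c Γ := by
        rw [knapsackValue_eq, Finset.sum_sub_distrib, Finset.sum_const, Finset.card_range,
          nsmul_eq_mul]
        ring

theorem exists_sum_mul_eq_knapsackValue {Γ : ℝ} (hΓ : 0 ≤ Γ) :
    ∃ u : Fin n → ℝ, (∀ i, u i ∈ Set.Icc (0 : ℝ) 1) ∧ ∑ i, u i ≤ Γ ∧
      ∑ i ∈ S, c i * u i = knapsackValue S c Γ := by
  obtain ⟨σ, hσ⟩ := exists_equiv_kthLargest S c
  set K := min S.card ⌊Γ⌋₊
  set Δ := min Γ (S.card : ℝ) - min (⌊Γ⌋₊ : ℝ) S.card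
  set w := greedyWeight K Δ
  have hw : ∀ f : ℕ → ℝ, ∑ k ∈ range S.card, f k * w k = ∑ k ∈ range K, f k + Δ * f K :=
    fun f => sum_range_mul_greedyWeight f (min_le_left _ _) (min_sub_min_floor_eq_zero hΓ)
  let u : Fin n → ℝ := fun i => if h : i ∈ S then w (σ.symm ⟨i, h⟩) else 0
  have hS : ∀ F : Fin n → ℝ, ∑ i ∈ S, F i * u i = ∑ k : Fin S.card, F (σ k) * w k := by
    intro F
    rw [← Finset.sum_coe_sort, ← σ.sum_comp]
    simp [u]
  refine ⟨u, fun i => ?_, ?_, ?_⟩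
  · by_cases h : i ∈ S
    · simpa [u, h] using greedyWeight_mem_Icc (min_sub_min_floor_mem_Icc hΓ S.card) _
    · simp [u, h]
  · have huniv : ∑ i, u i = ∑ i ∈ S, 1 * u i := by
      simpa using (Finset.sum_subset S.subset_univ fun i _ hi => dif_neg hi).symm
    rw [huniv, hS, Fin.sum_univ_eq_sum_range (fun k => 1 * w k), hw, mul_one,
      Finset.sum_const, Finset.card_range, nsmul_one, cast_min_floor_add_sub]
    exact min_le_left _ _
  · rw [hS, knapsackValue_eq, ← hw]
    simp only [hσ]
    exact Fin.sum_univ_eq_sum_range (fun k => kthLargest S c (k + 1) * w k) _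

end knapsack

theorem isGreatest_sum_budgetU {n : ℕ} (S : Finset (Fin n)) {d0 : Fin n → ℝ}
    (hd0 : ∀ i, 0 ≤ d0 i) {α Γ : ℝ} (hα : 0 ≤ α) (hΓ : 0 ≤ Γ) :
    IsGreatest ((fun d => ∑ i ∈ S, d i) '' budgetU d0 α Γ)
      (∑ i ∈ S, d0 i + α * knapsackValue S d0 Γ) := by
  have hexpand : ∀ u : Fin n → ℝ,
      ∑ i ∈ S, d0 i * (1 + α * u i) = ∑ i ∈ S, d0 i + α * ∑ i ∈ S, d0 i * u i := fun u => by
    rw [Finset.mul_sum, ← Finset.sum_add_distrib]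
    exact Finset.sum_congr rfl fun i _ => by ring
  constructor
  · obtain ⟨u, hu, hsum, hval⟩ := exists_sum_mul_eq_knapsackValue S d0 hΓ
    exact ⟨_, ⟨u, hu, fun _ => rfl, hsum⟩, by simp only [hexpand, hval]⟩
  · rintro _ ⟨d, ⟨u, hu, hd, hsum⟩, rfl⟩
    simp only [hd, hexpand]
    gcongr
    exact sum_mul_le_knapsackValue S d0 hd0 hu hsum

theorem budget_fixed_allocation_sup_general
    (n : ℕ) (d0 : Fin n → ℝ) (hd0 : ∀ i, 0 ≤ d0 i)
    (α Γ : ℝ) (hα : 0 < α) (hΓ : 0 ≤ Γ)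
    (x : Fin n → Bool) (I Ibar : Finset (Fin n))
    (hI : I = Finset.univ.filter (fun i => x i = true))
    (hIbar : Ibar = Finset.univ.filter (fun i => x i = false)) :
    sSup ((fun d => M2 x d) '' budgetU d0 α Γ) =
      max
        ((∑ i ∈ I, d0 i) + α *
          ((∑ k ∈ Finset.Icc 1 (min I.card ⌊Γ⌋₊), kthLargest I d0 k) +
            (min Γ (I.card : ℝ) - min (⌊Γ⌋₊ : ℝ) (I.card : ℝ)) *
              kthLargest I d0 (min I.card ⌊Γ⌋₊ + 1)))
        ((∑ i ∈ Ibar, d0 i) + α *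
          ((∑ k ∈ Finset.Icc 1 (min Ibar.card ⌊Γ⌋₊), kthLargest Ibar d0 k) +
            (min Γ (Ibar.card : ℝ) - min (⌊Γ⌋₊ : ℝ) (Ibar.card : ℝ)) *
              kthLargest Ibar d0 (min Ibar.card ⌊Γ⌋₊ + 1))) ∧
    SA (budgetU d0 α Γ) ≤
      max
        ((∑ i ∈ I, d0 i) + α *
          ((∑ k ∈ Finset.Icc 1 (min I.card ⌊Γ⌋₊), kthLargest I d0 k) +
            (min Γ (I.card : ℝ) - min (⌊Γ⌋₊ : ℝ) (I.card : ℝ)) *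
              kthLargest I d0 (min I.card ⌊Γ⌋₊ + 1)))
        ((∑ i ∈ Ibar, d0 i) + α *
          ((∑ k ∈ Finset.Icc 1 (min Ibar.card ⌊Γ⌋₊), kthLargest Ibar d0 k) +
            (min Γ (Ibar.card : ℝ) - min (⌊Γ⌋₊ : ℝ) (Ibar.card : ℝ)) *
              kthLargest Ibar d0 (min Ibar.card ⌊Γ⌋₊ + 1))) := by
  have hmax := (isGreatest_sum_budgetU I hd0 hα.le hΓ).image_max
    (isGreatest_sum_budgetU Ibar hd0 hα.le hΓ)
  have hM2 : (fun d => M2 x d) = fun d => max (∑ i ∈ I, d i) (∑ i ∈ Ibar, d i) := by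
    subst hI hIbar
    rfl
  rw [← hM2] at hmax
  exact ⟨hmax.csSup_eq, (ciInf_le (Set.finite_range _).bddBelow x).trans hmax.csSup_eq.le⟩

/-- closed form of the worst-case makespan of a fixed allocation `x` over
the budgeted uncertainty set, and the resulting upper bound on `SA`. -/
theorem budget_fixed_allocation_sup
    (n : ℕ) (hn : 1 ≤ n) (d0 : Fin n → ℝ) (hd0 : ∀ i, 0 ≤ d0 i)
    (α Γ : ℝ) (hα : 0 < α) (hΓ : 0 ≤ Γ)
    (x : Fin n → Bool) (I Ibar : Finset (Fin n))
    (hI : I = Finset.univ.filter (fun i => x i = true))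
    (hIbar : Ibar = Finset.univ.filter (fun i => x i = false)) :
    sSup ((fun d => M2 x d) '' budgetU d0 α Γ) =
      max
        ((∑ i ∈ I, d0 i) + α *
          ((∑ k ∈ Finset.Icc 1 (min I.card ⌊Γ⌋₊), kthLargest I d0 k) +
            (min Γ (I.card : ℝ) - min (⌊Γ⌋₊ : ℝ) (I.card : ℝ)) *
              kthLargest I d0 (min I.card ⌊Γ⌋₊ + 1)))
        ((∑ i ∈ Ibar, d0 i) + α *
          ((∑ k ∈ Finset.Icc 1 (min Ibar.card ⌊Γ⌋₊), kthLargest Ibar d0 k) +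
            (min Γ (Ibar.card : ℝ) - min (⌊Γ⌋₊ : ℝ) (Ibar.card : ℝ)) *
              kthLargest Ibar d0 (min Ibar.card ⌊Γ⌋₊ + 1))) ∧
    SA (budgetU d0 α Γ) ≤
      max
        ((∑ i ∈ I, d0 i) + α *
          ((∑ k ∈ Finset.Icc 1 (min I.card ⌊Γ⌋₊), kthLargest I d0 k) +
            (min Γ (I.card : ℝ) - min (⌊Γ⌋₊ : ℝ) (I.card : ℝ)) *
              kthLargest I d0 (min I.card ⌊Γ⌋₊ + 1)))
        ((∑ i ∈ Ibar, d0 i) + α *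
          ((∑ k ∈ Finset.Icc 1 (min Ibar.card ⌊Γ⌋₊), kthLargest Ibar d0 k) +
            (min Γ (Ibar.card : ℝ) - min (⌊Γ⌋₊ : ℝ) (Ibar.card : ℝ)) *
              kthLargest Ibar d0 (min Ibar.card ⌊Γ⌋₊ + 1))) :=
  budget_fixed_allocation_sup_general n d0 hd0 α Γ hα hΓ x I Ibar hI hIbar
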